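/- Fix n ∈ ℕ and q ∈ [1,∞). Let (X,d_X) be a metric space and f : 𝔽₂ⁿ → X. Then for every k, m ∈ {1,…,n} with k + m ≤ n one has E_{k+m}^{(q)}(f) ≤ E_k^{(q)}(f) + E_m^{(q)}(f). -/

import Mathlib

/-! Pick a uniformly random pair of disjoint sets `(J, K)` with `|J| = k`, `|K| = m` and a
uniformly random `z ∈ 𝔽₂ⁿ`. Then `J ∪ K`, `J`, `K` are uniform among the sets of their sizes and
`z + e_J` is uniform, so `E_{k+m}^q`, `E_k^q`, `E_m^q` are the `q`-th moments of
`d(f(z + e_{J∪K}), f(z))`, `d(f(z + e_J), f(z))` and `d(f(z + e_J + e_K), f(z + e_J))`.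
The triangle inequality and Minkowski's inequality in `L^q` of this probability space conclude. -/

open scoped ENNReal

/-- `E_k^{(q)}(f)` for `f : 𝔽₂ⁿ → X`:
`E_k^{(q)}(f)^q = (1/(2ⁿ·binom(n,k)))·∑_{|I|=k} ∑_{z ∈ 𝔽₂ⁿ} d_X(f(z+e_I), f(z))^q`. -/
noncomputable def cubeE {n : ℕ} {X : Type*} [PseudoMetricSpace X] (q : ℝ)
    (f : (Fin n → ZMod 2) → X) (k : ℕ) : ℝ :=
  ((∑ I ∈ Finset.univ.filter (fun I : Finset (Fin n) => I.card = k),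
      ∑ z : Fin n → ZMod 2,
        dist (f (fun j => z j + if j ∈ I then 1 else 0)) (f z) ^ q) /
    (2 ^ n * (n.choose k : ℝ))) ^ (1 / q)

open Finset

section FiberCounting

variable {α β : Type*} [DecidableEq β] {s : Finset α} {t : Finset β} {π : α → β}

theorem sum_comp_eq_nsmul_of_card_fiber {M : Type*} [AddCommMonoid M]
    (hπ : ∀ a ∈ s, π a ∈ t) {c : ℕ} (hc : ∀ b ∈ t, #{a ∈ s | π a = b} = c) (g : β → M) :
    ∑ a ∈ s, g (π a) = c • ∑ b ∈ t, g b := by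
  rw [← sum_fiberwise_of_maps_to' hπ, smul_sum]
  exact sum_congr rfl fun b hb => by rw [sum_const, hc b hb]

theorem sum_comp_div_card_of_card_fiber (hπ : ∀ a ∈ s, π a ∈ t) {c : ℕ} (hc0 : c ≠ 0)
    (hc : ∀ b ∈ t, #{a ∈ s | π a = b} = c) (g : β → ℝ) :
    (∑ a ∈ s, g (π a)) / #s = (∑ b ∈ t, g b) / #t := by
  have hcard : (#s : ℝ) = c * #t := by
    simpa using sum_comp_eq_nsmul_of_card_fiber hπ hc (fun _ => (1 : ℝ))
  rw [sum_comp_eq_nsmul_of_card_fiber hπ hc, hcard, nsmul_eq_mul,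
    mul_div_mul_left _ _ (Nat.cast_ne_zero.2 hc0)]

end FiberCounting

section DisjointPairs

variable {ι : Type*} [Fintype ι] [DecidableEq ι]

variable (ι) in
def disjointPairs (k m : ℕ) : Finset (Finset ι × Finset ι) :=
  {p | #p.1 = k ∧ #p.2 = m ∧ Disjoint p.1 p.2}

theorem mem_disjointPairs {k m : ℕ} {p : Finset ι × Finset ι} :
    p ∈ disjointPairs ι k m ↔ #p.1 = k ∧ #p.2 = m ∧ Disjoint p.1 p.2 := by
  simp [disjointPairs]

theorem card_disjointPairs_filter_union {k m : ℕ} {I : Finset ι} (hI : #I = k + m) :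
    #{p ∈ disjointPairs ι k m | p.1 ∪ p.2 = I} = (k + m).choose k := by
  rw [← hI, ← card_powersetCard]
  refine card_nbij' Prod.fst (fun J => (J, I \ J)) ?_ ?_ ?_ ?_
  · rintro ⟨J, K⟩ hp
    simp only [mem_coe, mem_filter, mem_disjointPairs] at hp
    obtain ⟨⟨hJ, -, -⟩, rfl⟩ := hp
    simp [hJ]
  · intro J hJ
    rw [mem_coe, mem_powersetCard] at hJ
    simp only [mem_coe, mem_filter, mem_disjointPairs]
    refine ⟨⟨hJ.2, ?_, disjoint_sdiff⟩, union_sdiff_of_subset hJ.1⟩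
    rw [card_sdiff_of_subset hJ.1, hI, hJ.2, Nat.add_sub_cancel_left]
  · rintro ⟨J, K⟩ hp
    simp only [mem_coe, mem_filter, mem_disjointPairs] at hp
    obtain ⟨⟨-, -, hJK⟩, rfl⟩ := hp
    simp [union_sdiff_cancel_left hJK]
  · intro J _
    rfl

theorem card_disjointPairs_filter_snd {k m : ℕ} {K : Finset ι} (hK : #K = m) :
    #{p ∈ disjointPairs ι k m | p.2 = K} = (Fintype.card ι - m).choose k := by
  rw [← hK, ← card_compl, ← card_powersetCard]
  refine card_nbij' Prod.fst (fun J => (J, K)) ?_ ?_ ?_ ?_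
  · rintro ⟨J, K⟩ hp
    simp only [mem_coe, mem_filter, mem_disjointPairs] at hp
    obtain ⟨⟨hJ, -, hJK⟩, rfl⟩ := hp
    simpa [hJ, subset_compl_iff_disjoint_right] using hJK
  · intro J hJ
    rw [mem_coe, mem_powersetCard, subset_compl_iff_disjoint_right] at hJ
    simp [mem_disjointPairs, hJ, hK]
  · rintro ⟨J, K⟩ hp
    simp only [mem_coe, mem_filter, mem_disjointPairs] at hp
    simp [hp.2]
  · intro J _
    rfl

theorem card_disjointPairs_filter_fst {k m : ℕ} {J : Finset ι} (hJ : #J = k) :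
    #{p ∈ disjointPairs ι k m | p.1 = J} = (Fintype.card ι - k).choose m := by
  rw [← card_disjointPairs_filter_snd hJ]
  refine card_nbij' Prod.swap Prod.swap ?_ ?_ (fun _ _ => rfl) (fun _ _ => rfl) <;>
  · rintro ⟨J, K⟩
    simp [mem_disjointPairs, disjoint_comm, and_left_comm]

variable (ι) in
theorem sum_disjointPairs_union_div_card (k m : ℕ) (g : Finset ι → ℝ) :
    (∑ p ∈ disjointPairs ι k m, g (p.1 ∪ p.2)) / #(disjointPairs ι k m)
      = (∑ I ∈ powersetCard (k + m) univ, g I) / (Fintype.card ι).choose (k + m) := by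
  rw [sum_comp_div_card_of_card_fiber (t := powersetCard (k + m) univ) ?_
    (Nat.choose_pos (Nat.le_add_right k m)).ne' fun I hI => card_disjointPairs_filter_union
      (mem_powersetCard_univ.1 hI), card_powersetCard, card_univ]
  intro p hp
  obtain ⟨hJ, hK, hJK⟩ := mem_disjointPairs.1 hp
  rw [mem_powersetCard_univ, card_union_of_disjoint hJK, hJ, hK]

variable (ι) in
theorem sum_disjointPairs_fst_div_card {k m : ℕ} (hkm : k + m ≤ Fintype.card ι)
    (g : Finset ι → ℝ) :
    (∑ p ∈ disjointPairs ι k m, g p.1) / #(disjointPairs ι k m)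
      = (∑ J ∈ powersetCard k univ, g J) / (Fintype.card ι).choose k := by
  rw [sum_comp_div_card_of_card_fiber (t := powersetCard k univ) ?_
    (Nat.choose_pos (by omega)).ne' fun J hJ => card_disjointPairs_filter_fst
      (mem_powersetCard_univ.1 hJ), card_powersetCard, card_univ]
  exact fun p hp => mem_powersetCard_univ.2 (mem_disjointPairs.1 hp).1

variable (ι) in
theorem sum_disjointPairs_snd_div_card {k m : ℕ} (hkm : k + m ≤ Fintype.card ι)
    (g : Finset ι → ℝ) :
    (∑ p ∈ disjointPairs ι k m, g p.2) / #(disjointPairs ι k m)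
      = (∑ K ∈ powersetCard m univ, g K) / (Fintype.card ι).choose m := by
  rw [sum_comp_div_card_of_card_fiber (t := powersetCard m univ) ?_
    (Nat.choose_pos (by omega)).ne' fun K hK => card_disjointPairs_filter_snd
      (mem_powersetCard_univ.1 hK), card_powersetCard, card_univ]
  exact fun p hp => mem_powersetCard_univ.2 (mem_disjointPairs.1 hp).2.1

end DisjointPairs

theorem rpow_sum_div_le_of_le_add {α : Type*} (s : Finset α) {p c : ℝ} (hp : 1 ≤ p)
    (hc : 0 ≤ c) {F G H : α → ℝ} (hF : ∀ a ∈ s, 0 ≤ F a) (hG : ∀ a ∈ s, 0 ≤ G a)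
    (hH : ∀ a ∈ s, 0 ≤ H a) (hFGH : ∀ a ∈ s, F a ≤ G a + H a) :
    ((∑ a ∈ s, F a ^ p) / c) ^ (1 / p)
      ≤ ((∑ a ∈ s, G a ^ p) / c) ^ (1 / p) + ((∑ a ∈ s, H a ^ p) / c) ^ (1 / p) := by
  have hp0 : 0 < p := by linarith
  have hsum {u : α → ℝ} (hu : ∀ a ∈ s, 0 ≤ u a) : 0 ≤ ∑ a ∈ s, u a ^ p :=
    sum_nonneg fun a ha => Real.rpow_nonneg (hu a ha) p
  rw [Real.div_rpow (hsum hF) hc, Real.div_rpow (hsum hG) hc, Real.div_rpow (hsum hH) hc,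
    ← add_div]
  gcongr
  calc (∑ a ∈ s, F a ^ p) ^ (1 / p) ≤ (∑ a ∈ s, (G a + H a) ^ p) ^ (1 / p) :=
        Real.rpow_le_rpow (hsum hF) (sum_le_sum fun a ha =>
          Real.rpow_le_rpow (hF a ha) (hFGH a ha) hp0.le) (by positivity)
    _ ≤ _ := Real.Lp_add_le_of_nonneg s hp hG hH

section Cube

variable {ι X : Type*} [DecidableEq ι] [PseudoMetricSpace X]

def indicatorVec (I : Finset ι) : ι → ZMod 2 := fun j => if j ∈ I then 1 else 0

theorem indicatorVec_union {J K : Finset ι} (h : Disjoint J K) :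
    indicatorVec (J ∪ K) = indicatorVec J + indicatorVec K := by
  funext j
  by_cases hJ : j ∈ J
  · simp [indicatorVec, hJ, disjoint_left.1 h hJ]
  · simp [indicatorVec, hJ]

noncomputable def edgeSum [Fintype ι] (q : ℝ) (f : (ι → ZMod 2) → X) (I : Finset ι) : ℝ :=
  ∑ z, dist (f (z + indicatorVec I)) (f z) ^ q

theorem sum_dist_add_indicatorVec_union [Fintype ι] (q : ℝ) (f : (ι → ZMod 2) → X)
    {J K : Finset ι} (h : Disjoint J K) :
    ∑ z, dist (f (z + indicatorVec (J ∪ K))) (f (z + indicatorVec J)) ^ q = edgeSum q f K := by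
  simp_rw [indicatorVec_union h, ← add_assoc]
  exact Equiv.sum_comp (Equiv.addRight (indicatorVec J))
    fun w => dist (f (w + indicatorVec K)) (f w) ^ q

end Cube

theorem cubeE_eq_edgeSum {n : ℕ} {X : Type*} [PseudoMetricSpace X] (q : ℝ)
    (f : (Fin n → ZMod 2) → X) (k : ℕ) :
    cubeE q f k = ((∑ I ∈ powersetCard k univ, edgeSum q f I) / n.choose k / 2 ^ n) ^ (1 / q) := by
  rw [powersetCard_eq_filter, powerset_univ, div_div, mul_comm]
  rfl

theorem cubeE_subadditive {n : ℕ} (q : ℝ) (hq : 1 ≤ q)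
    (X : Type*) [MetricSpace X] (f : (Fin n → ZMod 2) → X)
    (k m : ℕ) (hkm : k + m ≤ n) :
    cubeE q f (k + m) ≤ cubeE q f k + cubeE q f m := by
  have hkm' : k + m ≤ Fintype.card (Fin n) := by rwa [Fintype.card_fin]
  have hU := sum_disjointPairs_union_div_card (Fin n) k m (edgeSum q f)
  have hJ := sum_disjointPairs_fst_div_card (Fin n) hkm' (edgeSum q f)
  have hK := sum_disjointPairs_snd_div_card (Fin n) hkm' (edgeSum q f)
  rw [Fintype.card_fin] at hU hJ hK
  have hshift : ∀ p ∈ disjointPairs (Fin n) k m, edgeSum q f p.2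
      = ∑ z, dist (f (z + indicatorVec (p.1 ∪ p.2))) (f (z + indicatorVec p.1)) ^ q := fun p hp =>
    (sum_dist_add_indicatorVec_union q f (mem_disjointPairs.1 hp).2.2).symm
  rw [cubeE_eq_edgeSum, cubeE_eq_edgeSum, cubeE_eq_edgeSum, ← hU, ← hJ, ← hK,
    sum_congr rfl hshift, div_div, div_div, div_div]
  simp only [edgeSum, ← sum_product']
  exact rpow_sum_div_le_of_le_add _ hq (by positivity) (fun _ _ => dist_nonneg)
    (fun _ _ => dist_nonneg) (fun _ _ => dist_nonneg)
    fun _ _ => (dist_triangle _ _ _).trans_eq (add_comm _ _)
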